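/- Let m ≥ 2 be an even natural number. For each integer 1 ≤ j ≤ m/2 − 1, C(j) = (-1)^{m/2 + j − 1} · [−C(m-1, 2j−1) + ∑_{k=0}^{m/2 − j − 1} (C(m-1, 2k+2j)·C(m-1, 2k+1) − C(m-1, 2k)·C(m-1, 2k+2j−1))] equals C(m-1, j + m/2 − 1). -/

import Mathlib

/-!
Write `N = m - 1` and `M = m/2 - j`. Comparing coefficients of `X ^ (2M)` in
`(1 - X) ^ N * (1 + X) ^ N = (1 - X ^ 2) ^ N` gives
`∑_{i ≤ 2M} (-1)^i C(N,i) C(N,2M-i) = (-1)^M C(N,M)`.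
Since `N = 2M + 2j - 1`, symmetry turns `C(N, 2M - i)` into `C(N, i + 2j - 1)`; grouping the
terms `i = 2k, 2k + 1` gives minus the `k`-th summand of the theorem, and the last term
`i = 2M` is `C(N, 2j - 1)`.
-/

open Finset Polynomial

section
variable {R : Type*} [CommRing R]

theorem coeff_one_sub_X_pow (N k : ℕ) :
    ((1 - X : R[X]) ^ N).coeff k = (-1) ^ k * N.choose k := by
  have hterm (i : ℕ) : (-X : R[X]) ^ i = C ((-1) ^ i) * X ^ i := by
    rw [neg_eq_neg_one_mul, mul_pow, C_pow, C_neg, C_1]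
  rw [sub_eq_neg_add, add_pow, finsetSum_coeff]
  simp only [one_pow, mul_one, hterm, coeff_mul_natCast, coeff_C_mul_X_pow, ite_mul, zero_mul,
    sum_ite_eq, mem_range]
  split_ifs with h
  · rfl
  · rw [Nat.choose_eq_zero_of_lt (by omega), Nat.cast_zero, mul_zero]

theorem sum_range_neg_one_pow_mul_choose_mul_choose_sub (N n : ℕ) :
    ∑ i ∈ range (n + 1), (-1 : R) ^ i * N.choose i * N.choose (n - i) =
      ((1 - X ^ 2 : R[X]) ^ N).coeff n := by
  rw [show (1 - X ^ 2 : R[X]) = (1 - X) * (1 + X) by ring, mul_pow, coeff_mul,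
    Nat.sum_antidiagonal_eq_sum_range_succ_mk]
  simp only [coeff_one_sub_X_pow, coeff_one_add_X_pow]

theorem coeff_one_sub_X_sq_pow_two_mul (N M : ℕ) :
    ((1 - X ^ 2 : R[X]) ^ N).coeff (2 * M) = (-1) ^ M * N.choose M := by
  rw [show (1 - X ^ 2 : R[X]) ^ N = expand R 2 ((1 - X) ^ N) by simp, coeff_expand_mul' two_pos,
    coeff_one_sub_X_pow]

theorem sum_range_neg_one_pow_mul_choose_mul_choose_two_mul_sub (N M : ℕ) :
    ∑ i ∈ range (2 * M + 1), (-1 : R) ^ i * N.choose i * N.choose (2 * M - i) =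
      (-1) ^ M * N.choose M := by
  rw [sum_range_neg_one_pow_mul_choose_mul_choose_sub, coeff_one_sub_X_sq_pow_two_mul]

end

theorem Finset.sum_range_two_mul {M : Type*} [AddCommMonoid M] (n : ℕ) (f : ℕ → M) :
    ∑ i ∈ range (2 * n), f i = ∑ k ∈ range n, (f (2 * k) + f (2 * k + 1)) := by
  induction n with
  | zero => simp
  | succ n ih => rw [mul_add_one, sum_range_succ, sum_range_succ, sum_range_succ, ih, add_assoc]

theorem stmt_9_general (m : ℕ) (hme : Even m) (j : ℕ) (hj1 : 1 ≤ j)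
    (hj2 : j ≤ m / 2 - 1) :
    (-1 : ℤ) ^ (m / 2 + j - 1) *
      (-((m - 1).choose (2 * j - 1) : ℤ) +
        ∑ k ∈ Finset.range (m / 2 - j),
          (((m - 1).choose (2 * k + 2 * j) : ℤ) * ((m - 1).choose (2 * k + 1)) -
            ((m - 1).choose (2 * k) : ℤ) * ((m - 1).choose (2 * k + 2 * j - 1)))) =
    ((m - 1).choose (j + m / 2 - 1) : ℤ) := by
  obtain ⟨r, rfl⟩ := hme
  rw [show (r + r) / 2 = r by omega] at hj2 ⊢
  set N := r + r - 1
  set M := r - j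
  have hident := sum_range_neg_one_pow_mul_choose_mul_choose_two_mul_sub (R := ℤ) N M
  rw [sum_range_succ, sum_range_two_mul] at hident
  have hpair : ∀ k ∈ range M,
      (N.choose (2 * k + 2 * j) : ℤ) * N.choose (2 * k + 1) -
          N.choose (2 * k) * N.choose (2 * k + 2 * j - 1) =
        -((-1) ^ (2 * k) * N.choose (2 * k) * N.choose (2 * M - 2 * k) +
          (-1) ^ (2 * k + 1) * N.choose (2 * k + 1) * N.choose (2 * M - (2 * k + 1))) := by
    intro k hk
    rw [mem_range] at hk
    rw [← Nat.choose_symm (k := 2 * k + 2 * j) (by omega),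
      ← Nat.choose_symm (k := 2 * k + 2 * j - 1) (by omega),
      show N - (2 * k + 2 * j) = 2 * M - (2 * k + 1) by omega,
      show N - (2 * k + 2 * j - 1) = 2 * M - 2 * k by omega, pow_succ, pow_mul]
    ring
  have hlast : (-1 : ℤ) ^ (2 * M) * N.choose (2 * M) * N.choose (2 * M - 2 * M) =
      N.choose (2 * j - 1) := by
    rw [Nat.sub_self, Nat.choose_zero_right, pow_mul, neg_one_sq, one_pow,
      ← Nat.choose_symm (by omega), show N - 2 * M = 2 * j - 1 by omega]
    simp
  have hmiddle : N.choose M = N.choose (j + r - 1) := by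
    rw [← Nat.choose_symm (by omega), show N - M = j + r - 1 by omega]
  have hsign : (-1 : ℤ) ^ (r + j - 1) * (-1) ^ M = -1 := by
    rw [← pow_add, show r + j - 1 + M = 2 * (r - 1) + 1 by omega, pow_succ, pow_mul]
    simp
  rw [sum_congr rfl hpair, sum_neg_distrib]
  rw [hlast, hmiddle] at hident
  linear_combination (-(N.choose (j + r - 1) : ℤ)) * hsign - (-1 : ℤ) ^ (r + j - 1) * hident

theorem stmt_9 (m : ℕ) (hm : 2 ≤ m) (hme : Even m) (j : ℕ) (hj1 : 1 ≤ j)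
    (hj2 : j ≤ m / 2 - 1) :
    (-1 : ℤ) ^ (m / 2 + j - 1) *
      (-((m - 1).choose (2 * j - 1) : ℤ) +
        ∑ k ∈ Finset.range (m / 2 - j),
          (((m - 1).choose (2 * k + 2 * j) : ℤ) * ((m - 1).choose (2 * k + 1)) -
            ((m - 1).choose (2 * k) : ℤ) * ((m - 1).choose (2 * k + 2 * j - 1)))) =
    ((m - 1).choose (j + m / 2 - 1) : ℤ) :=
  stmt_9_general m hme j hj1 hj2
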